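/- There is a primitive recursive function B : ℕ² → ℕ such that for all d ≥ 1 and ℓ ∈ ℕ: if T̄ = (T₀, …, T_{d−1}) is a strong d-forest of depth B(d,ℓ), then for every coloring f of the 2-element subsets of Leaves(T₀) ∪ ⋯ ∪ Leaves(T_{d−1}) with 2 colors, there exists S̄ = (S₀, …, S_{d−1}) ∈ Str^l_ℓ(T̄) such that for all i, j < d, all σ, σ' ∈ Leaves(S_i) and all τ, τ' ∈ Leaves(S_j) with σ ≠ τ and σ' ≠ τ', f({σ,τ}) = f({σ',τ'}). -/

import Mathlib

/-!
Pull the colouring back along the forest to pairs of nodes of complete binary trees indexed by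
`ι`. First make it *canonical* (`IsCanonicalOn`): the colour of two leaves of one tree depends
only on the level of their meet, that of two leaves of different trees only on the two trees.
This goes by recursion on the depth: the subtrees above all nodes of some level `M` are made
canonical simultaneously; their colour patterns colour the tuples of level-`M` nodes, one per
tree, and Hales–Jewett over the alphabet `ι → Bool` yields a combinatorial line: two nodes per
tree, splitting at a common level (the first wildcard), every choice of which has the same
pattern. A pigeonhole over the meet levels then keeps `ℓ` levels carrying the same colour in
every tree. Shelah's proof of Hales–Jewett makes all depths primitive recursive.
-/

/-- `(T, f, h)` witnesses a strong `d`-forest of depth `ℓ`: `h` is the level function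
and `f i` maps the complete binary tree `2^{≤ℓ}` into `T i`, preserving levels and
the branching structure. -/
def IsStrongForest (d ℓ : ℕ) (T : Fin d → Finset (List Bool))
    (f : Fin d → List Bool → List Bool) (h : ℕ → ℕ) : Prop :=
  (∀ i : Fin d, ∀ σ : List Bool, σ.length ≤ ℓ →
    f i σ ∈ T i ∧ (f i σ).length = h σ.length) ∧
  (∀ i : Fin d, ∀ σ : List Bool, σ.length < ℓ → ∀ j : Bool,
    (f i σ ++ [j]) <+: f i (σ ++ [j]))

/-- The leaves of the tree embedded by `f` at depth `ℓ`. -/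
def Leaves (ℓ : ℕ) (f : List Bool → List Bool) : Set (List Bool) :=
  {t | ∃ σ : List Bool, σ.length = ℓ ∧ f σ = t}

namespace List

variable {α : Type*} [DecidableEq α]

def commonPrefixLen : List α → List α → ℕ
  | a :: x, b :: y => if a = b then commonPrefixLen x y + 1 else 0
  | _, _ => 0

@[simp]
theorem commonPrefixLen_cons_self (a : α) (x y : List α) :
    commonPrefixLen (a :: x) (a :: y) = commonPrefixLen x y + 1 := by
  simp [commonPrefixLen]

theorem commonPrefixLen_cons_of_ne {a b : α} (hab : a ≠ b) (x y : List α) :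
    commonPrefixLen (a :: x) (b :: y) = 0 := by
  simp [commonPrefixLen, hab]

@[simp]
theorem commonPrefixLen_self (x : List α) : commonPrefixLen x x = x.length := by
  induction x with
  | nil => rfl
  | cons a x ih => simp [ih]

theorem commonPrefixLen_append_cons (p : List α) {a b : α} (hab : a ≠ b) (x y : List α) :
    commonPrefixLen (p ++ a :: x) (p ++ b :: y) = p.length := by
  induction p with
  | nil => exact commonPrefixLen_cons_of_ne hab x y
  | cons c p ih => simp [ih]

theorem commonPrefixLen_eq_of_prefix {p x y : List α} {a b : α} (ha : p ++ [a] <+: x)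
    (hb : p ++ [b] <+: y) (hab : a ≠ b) : commonPrefixLen x y = p.length := by
  obtain ⟨x', rfl⟩ := ha
  obtain ⟨y', rfl⟩ := hb
  simpa using commonPrefixLen_append_cons p hab x' y'

theorem exists_eq_append_cons_of_ne {x y : List α} (hlen : x.length = y.length) (hne : x ≠ y) :
    ∃ (p x' y' : List α) (a b : α), a ≠ b ∧ p.length = commonPrefixLen x y ∧
      x = p ++ a :: x' ∧ y = p ++ b :: y' := by
  induction x generalizing y with
  | nil => exact absurd (eq_nil_of_length_eq_zero hlen.symm).symm hne
  | cons a x ih =>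
    obtain _ | ⟨b, y⟩ := y
    · simp at hlen
    by_cases hab : a = b
    · subst hab
      obtain ⟨p, x', y', c, d, hcd, hp, rfl, rfl⟩ :=
        ih (by simpa using hlen) (fun h => hne (h ▸ rfl))
      exact ⟨a :: p, x', y', c, d, hcd, by simp [hp], rfl, rfl⟩
    · exact ⟨[], x, y, a, b, hab, (commonPrefixLen_cons_of_ne hab x y).symm, rfl, rfl⟩

theorem commonPrefixLen_lt_length {x y : List α} (hlen : x.length = y.length) (hne : x ≠ y) :
    commonPrefixLen x y < x.length := by
  obtain ⟨p, x', _, _, _, _, hp, rfl, _⟩ := exists_eq_append_cons_of_ne hlen hne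
  simp [← hp]

end List

open List

structure IsStrongEmbedding (D K : ℕ) (e : List Bool → List Bool) (h : ℕ → ℕ) : Prop where
  length_eq : ∀ σ : List Bool, σ.length ≤ D → (e σ).length = h σ.length
  append_prefix : ∀ σ : List Bool, σ.length < D → ∀ j : Bool, e σ ++ [j] <+: e (σ ++ [j])
  level_top : h D = K

namespace IsStrongEmbedding

variable {D K : ℕ} {e : List Bool → List Bool} {h : ℕ → ℕ}

theorem map_prefix (H : IsStrongEmbedding D K e h) {x y : List Bool} (hxy : x <+: y)
    (hy : y.length ≤ D) : e x <+: e y := by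
  induction y using reverseRecOn generalizing x with
  | nil => rw [prefix_nil.1 hxy]
  | append_singleton y j ih =>
    rw [length_append, length_singleton] at hy
    rcases prefix_concat_iff.1 hxy with rfl | hxy
    · exact prefix_rfl
    · exact ((ih hxy (by omega)).trans (prefix_append _ _)).trans (H.append_prefix y hy j)

theorem level_lt (H : IsStrongEmbedding D K e h) {s t : ℕ} (hst : s < t) (ht : t ≤ D) :
    h s < h t := by
  have hpre : replicate s false ++ [false] <+: replicate t false := by
    rw [← replicate_succ']
    exact prefix_replicate_iff.2 ⟨by simp; omega, by simp⟩
  have := ((H.append_prefix _ (by simp; omega) false).trans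
    (H.map_prefix hpre (by simpa using ht))).length_le
  rw [length_append, H.length_eq _ (by simp; omega), H.length_eq _ (by simpa using ht)] at this
  simpa using this

theorem level_le_top (H : IsStrongEmbedding D K e h) {s : ℕ} (hs : s ≤ D) : h s ≤ K := by
  rw [← H.level_top]
  rcases hs.lt_or_eq with hs | rfl
  exacts [(H.level_lt hs le_rfl).le, le_rfl]

theorem exists_split (H : IsStrongEmbedding D K e h) {x y : List Bool} (hx : x.length = D)
    (hy : y.length = D) (hne : x ≠ y) :
    ∃ (p : List Bool) (a b : Bool), a ≠ b ∧ p.length = commonPrefixLen x y ∧ p.length < D ∧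
      e p ++ [a] <+: e x ∧ e p ++ [b] <+: e y := by
  obtain ⟨p, x', y', a, b, hab, hp, rfl, rfl⟩ := exists_eq_append_cons_of_ne (hx.trans hy.symm) hne
  have hpD : p.length < D := by simp at hx; omega
  refine ⟨p, a, b, hab, hp, hpD, ?_, ?_⟩
  · exact (H.append_prefix p hpD a).trans (H.map_prefix ⟨x', by simp⟩ hx.le)
  · exact (H.append_prefix p hpD b).trans (H.map_prefix ⟨y', by simp⟩ hy.le)

theorem commonPrefixLen_map (H : IsStrongEmbedding D K e h) {x y : List Bool}
    (hx : x.length = D) (hy : y.length = D) (hne : x ≠ y) :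
    commonPrefixLen (e x) (e y) = h (commonPrefixLen x y) := by
  obtain ⟨p, a, b, hab, hp, hpD, hax, hby⟩ := H.exists_split hx hy hne
  rw [commonPrefixLen_eq_of_prefix hax hby hab, H.length_eq p hpD.le, hp]

theorem map_ne_map (H : IsStrongEmbedding D K e h) {x y : List Bool}
    (hx : x.length = D) (hy : y.length = D) (hne : x ≠ y) : e x ≠ e y := by
  intro hxy
  have hlt := H.level_lt (commonPrefixLen_lt_length (hx.trans hy.symm) hne) hx.le
  rw [← H.commonPrefixLen_map hx hy hne, hxy, commonPrefixLen_self, H.length_eq y hy.le, hy,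
    hx] at hlt
  exact lt_irrefl _ hlt

theorem comp {L : ℕ} {e' : List Bool → List Bool} {h' : ℕ → ℕ} (H : IsStrongEmbedding D K e h)
    (H' : IsStrongEmbedding K L e' h') :
    IsStrongEmbedding D L (fun σ => e' (e σ)) (fun s => h' (h s)) where
  length_eq σ hσ := by
    rw [H'.length_eq _ (by rw [H.length_eq σ hσ]; exact H.level_le_top hσ), H.length_eq σ hσ]
  append_prefix σ hσ j := by
    have hlen : (e σ).length < K := by
      rw [H.length_eq σ hσ.le, ← H.level_top]; exact H.level_lt hσ le_rfl
    have hlen' : (e (σ ++ [j])).length ≤ K := by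
      rw [H.length_eq _ (by simpa using hσ)]; exact H.level_le_top (by simpa using hσ)
    exact (H'.append_prefix _ hlen j).trans (H'.map_prefix (H.append_prefix σ hσ j) hlen')
  level_top := by rw [H.level_top, H'.level_top]

end IsStrongEmbedding

theorem IsStrongForest.isStrongEmbedding {d ℓ : ℕ} {T : Fin d → Finset (List Bool)}
    {f : Fin d → List Bool → List Bool} {h : ℕ → ℕ} (H : IsStrongForest d ℓ T f h) (i : Fin d) :
    IsStrongEmbedding ℓ (h ℓ) (f i) h :=
  ⟨fun σ hσ => (H.1 i σ hσ).2, H.2 i, rfl⟩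

theorem IsStrongForest.comp {d ℓ K : ℕ} {T : Fin d → Finset (List Bool)}
    {f E : Fin d → List Bool → List Bool} {h h' : ℕ → ℕ} (H : IsStrongForest d K T f h)
    (hE : ∀ i, IsStrongEmbedding ℓ K (E i) h') :
    IsStrongForest d ℓ T (fun i σ => f i (E i σ)) fun s => h (h' s) :=
  ⟨fun i σ hσ => ⟨(H.1 i _ ((hE i).length_eq σ hσ ▸ (hE i).level_le_top hσ)).1,
      ((hE i).comp (H.isStrongEmbedding i)).length_eq σ hσ⟩,
    fun i => ((hE i).comp (H.isStrongEmbedding i)).append_prefix⟩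

theorem IsStrongEmbedding.leaves_comp_subset {ℓ K : ℕ} {e : List Bool → List Bool} {h : ℕ → ℕ}
    (H : IsStrongEmbedding ℓ K e h) (f : List Bool → List Bool) :
    Leaves ℓ (fun σ => f (e σ)) ⊆ Leaves K f := by
  rintro _ ⟨σ, hσ, rfl⟩
  exact ⟨e σ, by rw [H.length_eq σ hσ.le, hσ, H.level_top], rfl⟩

def selectLevels : (ℕ → ℕ) → List Bool → List Bool
  | v, [] => replicate (v 0) false
  | v, b :: σ => replicate (v 0) false ++ b :: selectLevels (fun t => v (t + 1) - (v 0 + 1)) σ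

theorem length_selectLevels {v : ℕ → ℕ} (hv : StrictMono v) (σ : List Bool) :
    (selectLevels v σ).length = v σ.length := by
  induction σ generalizing v with
  | nil => simp [selectLevels]
  | cons b σ ih =>
    have hshift : StrictMono (fun t => v (t + 1) - (v 0 + 1)) := fun s t hst => by
      have := hv (show s + 1 < t + 1 by omega); have := hv (show 0 < s + 1 by omega)
      simp only; omega
    have := hv (show 0 < σ.length + 1 by omega)
    simp [selectLevels, ih hshift]
    omega

theorem selectLevels_append_prefix (v : ℕ → ℕ) (σ : List Bool) (j : Bool) :
    selectLevels v σ ++ [j] <+: selectLevels v (σ ++ [j]) := by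
  induction σ generalizing v with
  | nil => exact (prefix_append_right_inj _).2 ⟨_, rfl⟩
  | cons b σ ih =>
    simp only [selectLevels, cons_append, append_assoc]
    exact (prefix_append_right_inj _).2 (cons_prefix_cons.2 ⟨rfl, ih _⟩)

theorem isStrongEmbedding_selectLevels {v : ℕ → ℕ} (hv : StrictMono v) (D : ℕ) :
    IsStrongEmbedding D (v D) (selectLevels v) v :=
  ⟨fun σ _ => length_selectLevels hv σ, fun σ _ j => selectLevels_append_prefix v σ j, rfl⟩

section

variable {α β C : Type*}

def fillTemplate (w : List (Option α)) (a : α) : List α := w.map (·.getD a)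

structure ShelahBlock where
  left : ℕ
  free : ℕ
  right : ℕ

namespace ShelahBlock

def size (b : ShelahBlock) : ℕ := b.left + b.free + b.right

def word (a₀ a₁ : α) (b : ShelahBlock) (a : α) : List α :=
  replicate b.left a₀ ++ replicate b.free a ++ replicate b.right a₁

@[simp]
theorem length_word (a₀ a₁ : α) (b : ShelahBlock) (a : α) : (b.word a₀ a₁ a).length = b.size := by
  simp [word, size, Nat.add_assoc]

theorem map_word (f : α → β) (a₀ a₁ : α) (b : ShelahBlock) (a : α) :
    (b.word a₀ a₁ a).map f = b.word (f a₀) (f a₁) (f a) := by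
  simp [word]

end ShelahBlock

def shelahWord (a₀ a₁ : α) (bs : List ShelahBlock) (as : List α) : List α :=
  (zipWith (ShelahBlock.word a₀ a₁) bs as).flatten

@[simp]
theorem shelahWord_cons (a₀ a₁ : α) (b : ShelahBlock) (bs : List ShelahBlock) (a : α)
    (as : List α) :
    shelahWord a₀ a₁ (b :: bs) (a :: as) = b.word a₀ a₁ a ++ shelahWord a₀ a₁ bs as :=
  rfl

theorem length_shelahWord (a₀ a₁ : α) {bs : List ShelahBlock} {as : List α}
    (h : as.length = bs.length) :
    (shelahWord a₀ a₁ bs as).length = (bs.map ShelahBlock.size).sum := by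
  induction bs generalizing as with
  | nil => rfl
  | cons b bs ih =>
    obtain _ | ⟨a, as⟩ := as
    · simp at h
    · simp [ih (by simpa using h)]

theorem map_shelahWord (f : α → β) (a₀ a₁ : α) (bs : List ShelahBlock) (as : List α) :
    (shelahWord a₀ a₁ bs as).map f = shelahWord (f a₀) (f a₁) bs (as.map f) := by
  simp [shelahWord, map_flatten, map_zipWith, zipWith_map_right, ShelahBlock.map_word]

theorem mem_shelahWord (a₀ a₁ : α) {bs : List ShelahBlock} {as : List α} {a : α}
    (h : as.length = bs.length) (hfree : ∀ b ∈ bs, 0 < b.free) (ha : a ∈ as) :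
    a ∈ shelahWord a₀ a₁ bs as := by
  induction bs generalizing as with
  | nil => simp_all
  | cons b bs ih =>
    obtain _ | ⟨a', as⟩ := as
    · simp at ha
    rw [shelahWord_cons, mem_append]
    rcases mem_cons.1 ha with rfl | ha
    · exact .inl (by simp [ShelahBlock.word, (hfree b mem_cons_self).ne'])
    · exact .inr (ih (by simpa using h) (fun b' hb' => hfree b' (mem_cons_of_mem _ hb')) ha)

/-- `Q` is the length of the word that precedes the blocks `bs`. -/
def IsInsensitive (χ : List α → C) (a₀ a₁ : α) : ℕ → List ShelahBlock → Prop
  | _, [] => True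
  | Q, b :: bs =>
    (∀ y : List α, y.length = Q → ∀ as : List α, as.length = bs.length →
      χ (y ++ (b.word a₀ a₁ a₀ ++ shelahWord a₀ a₁ bs as)) =
        χ (y ++ (b.word a₀ a₁ a₁ ++ shelahWord a₀ a₁ bs as))) ∧
    IsInsensitive χ a₀ a₁ (Q + b.size) bs

theorem IsInsensitive.apply_map_replace [DecidableEq α] {χ : List α → C} {a₀ a₁ : α} {Q : ℕ}
    {bs : List ShelahBlock} (H : IsInsensitive χ a₀ a₁ Q bs) {y as : List α} (hy : y.length = Q)
    (has : as.length = bs.length) :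
    χ (y ++ shelahWord a₀ a₁ bs (as.map fun a => if a = a₀ then a₁ else a)) =
      χ (y ++ shelahWord a₀ a₁ bs as) := by
  induction bs generalizing Q y as with
  | nil => rw [length_eq_zero_iff.1 has]; rfl
  | cons b bs ih =>
    obtain _ | ⟨a, as⟩ := as
    · simp at has
    have has : as.length = bs.length := by simpa using has
    obtain ⟨hb, hbs⟩ := H
    simp only [map_cons, shelahWord_cons, ← append_assoc]
    rw [ih hbs (by simp [hy]) (by simpa using has)]
    split_ifs with ha
    · subst ha
      simpa only [append_assoc] using (hb y hy as has).symm
    · rfl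

theorem exists_insensitive_block [Fintype α] [Fintype C] (χ : List α → C) (a₀ a₁ : α)
    (tail : List α → List α) {Q j m : ℕ}
    (hm : Fintype.card C ^ Fintype.card α ^ (Q + j) ≤ m) :
    ∃ b : ShelahBlock, 0 < b.free ∧ b.size = m ∧
      ∀ y : List α, y.length = Q → ∀ as : List α, as.length = j →
        χ (y ++ (b.word a₀ a₁ a₀ ++ tail as)) = χ (y ++ (b.word a₀ a₁ a₁ ++ tail as)) := by
  classical
  let stair (s : ℕ) : List α := replicate s a₀ ++ replicate (m - s) a₁
  let slice (s : Fin (m + 1)) (y : List.Vector α Q) (as : List.Vector α j) : C :=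
    χ (y.1 ++ (stair s ++ tail as.1))
  have hcard :
      Fintype.card (List.Vector α Q → List.Vector α j → C) < Fintype.card (Fin (m + 1)) := by
    simp only [Fintype.card_fun, card_vector, Fintype.card_fin, ← pow_mul, ← pow_add, add_comm j]
    omega
  -- Two staircases `a₀^s a₁^(m-s)` and `a₀^t a₁^(m-t)`, `s < t`, colour all contexts alike;
  -- the block `a₀^s a^(t-s) a₁^(m-t)` interpolates between them.
  obtain ⟨s, t, hst, hslice⟩ : ∃ s t : Fin (m + 1), s < t ∧ slice s = slice t := by
    obtain ⟨s, t, hne, heq⟩ := Fintype.exists_ne_map_eq_of_card_lt slice hcard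
    rcases lt_or_gt_of_ne hne with h | h
    exacts [⟨s, t, h, heq⟩, ⟨t, s, h, heq.symm⟩]
  have hs : (s : ℕ) < t := hst
  have ht : (t : ℕ) ≤ m := Nat.le_of_lt_succ t.2
  refine ⟨⟨s, t - s, m - t⟩, by simp; omega, by simp [ShelahBlock.size]; omega, ?_⟩
  intro y hy as has
  have hword₀ : ShelahBlock.word a₀ a₁ ⟨s, t - s, m - t⟩ a₀ = stair t := by
    simp only [ShelahBlock.word, stair, ← replicate_add]
    congr 2; omega
  have hword₁ : ShelahBlock.word a₀ a₁ ⟨s, t - s, m - t⟩ a₁ = stair s := by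
    simp only [ShelahBlock.word, stair, append_assoc, ← replicate_add]
    congr 2; omega
  rw [hword₀, hword₁]
  exact (congrFun (congrFun hslice ⟨y, hy⟩) ⟨as, has⟩).symm

def shelahBlockSize (k r n Q : ℕ) : ℕ := r ^ k ^ (Q + n)

theorem exists_insensitive_blocks [Fintype α] [Fintype C] (χ : List α → C) (a₀ a₁ : α)
    {n j : ℕ} (hj : j ≤ n) (Q : ℕ) :
    ∃ bs : List ShelahBlock, bs.length = j ∧ (∀ b ∈ bs, 0 < b.free) ∧
      Q + (bs.map ShelahBlock.size).sum =
        (fun P => P + shelahBlockSize (Fintype.card α) (Fintype.card C) n P)^[j] Q ∧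
      IsInsensitive χ a₀ a₁ Q bs := by
  induction j generalizing Q with
  | zero => exact ⟨[], rfl, by simp, by simp, trivial⟩
  | succ j ih =>
    set m := shelahBlockSize (Fintype.card α) (Fintype.card C) n Q
    obtain ⟨bs, hlen, hfree, hsize, hbs⟩ := ih (by omega) (Q + m)
    have hm : Fintype.card C ^ Fintype.card α ^ (Q + j) ≤ m := by
      have : 0 < Fintype.card α := Fintype.card_pos_iff.2 ⟨a₀⟩
      have : 0 < Fintype.card C := Fintype.card_pos_iff.2 ⟨χ []⟩
      exact Nat.pow_le_pow_right (by omega) (Nat.pow_le_pow_right (by omega) (by omega))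
    obtain ⟨b, hb_free, hb_size, hb⟩ :=
      exists_insensitive_block χ a₀ a₁ (shelahWord a₀ a₁ bs) hm
    refine ⟨b :: bs, by simp [hlen], ?_, ?_, fun y hy as has => hb y hy as (has.trans hlen),
      hb_size ▸ hbs⟩
    · simpa using ⟨hb_free, hfree⟩
    · rw [Function.iterate_succ_apply, ← hsize, map_cons, sum_cons, hb_size]
      ring

def hjBound (r : ℕ) : ℕ → ℕ
  | 0 => 1
  | 1 => 1
  | k + 2 => (fun P => P + shelahBlockSize (k + 2) r (hjBound r (k + 1)) P)^[hjBound r (k + 1)] 0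

end

theorem exists_mono_template {C : Type*} [Fintype C] (k : ℕ) :
    ∀ {α : Type*} [Fintype α], Fintype.card α = k → ∀ χ : List α → C,
      ∃ w : List (Option α), w.length = hjBound (Fintype.card C) k ∧ none ∈ w ∧
        ∀ a b : α, χ (fillTemplate w a) = χ (fillTemplate w b) := by
  induction k using Nat.twoStepInduction with
  | zero | one =>
    intro α _ hα χ
    have : Subsingleton α := Fintype.card_le_one_iff_subsingleton.1 (by omega)
    exact ⟨[none], rfl, mem_singleton_self _, fun a b => by rw [Subsingleton.elim a b]⟩
  | more k _ ih =>
    classical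
    intro α _ hα χ
    -- In insensitive blocks `a₀` may be replaced by `a₁`, so the colouring of block words
    -- factors through the smaller alphabet `{a // a ≠ a₀}`.
    obtain ⟨a₀, a₁, ha⟩ := Fintype.exists_pair_of_one_lt_card (by omega : 1 < Fintype.card α)
    have hβ : Fintype.card {a // a ≠ a₀} = k + 1 := by
      rw [Fintype.card_subtype_compl, Fintype.card_subtype_eq, hα]; rfl
    obtain ⟨bs, hlen, hfree, hsize, hins⟩ :=
      exists_insensitive_blocks χ a₀ a₁ (le_refl (hjBound (Fintype.card C) (k + 1))) 0
    let χ' (x : List {a // a ≠ a₀}) : C := χ (shelahWord a₀ a₁ bs (x.map Subtype.val))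
    obtain ⟨w, hwlen, hwnone, hw⟩ := ih hβ χ'
    let retract (a : α) : {a // a ≠ a₀} := if h : a = a₀ then ⟨a₁, ha.symm⟩ else ⟨a, h⟩
    let lift := shelahWord (some a₀) (some a₁) bs (w.map (Option.map Subtype.val))
    have hlift : (w.map (Option.map Subtype.val)).length = bs.length := by simp [hwlen, hlen]
    have key : ∀ a, χ (fillTemplate lift a) = χ' (fillTemplate w (retract a)) := by
      intro a
      have hretract : ((w.map (Option.map Subtype.val)).map (·.getD a)).map
          (fun a => if a = a₀ then a₁ else a) = (fillTemplate w (retract a)).map Subtype.val := by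
        simp only [fillTemplate, map_map]
        refine map_congr_left fun o _ => ?_
        rcases o with _ | ⟨c, hc⟩
        · by_cases h : a = a₀ <;> simp [retract, h]
        · simp [hc]
      have := hins.apply_map_replace (y := [])
        (as := (w.map (Option.map Subtype.val)).map (·.getD a)) rfl (by simpa using hlift)
      rw [nil_append, nil_append, hretract] at this
      rw [fillTemplate, map_shelahWord]
      exact this.symm
    refine ⟨lift, ?_, mem_shelahWord _ _ hlift hfree (mem_map_of_mem (f := Option.map _) hwnone),
      fun a b => by rw [key, key, hw]⟩
    rw [length_shelahWord _ _ hlift, ← zero_add (sum _), hsize, hα]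
    rfl

theorem Combinatorics.Line.exists_mono_of_eq_hjBound {α C : Type*} [Fintype α] [Nonempty α]
    [Fintype C] {n : ℕ}
    (hn : n = hjBound (Fintype.card C) (Fintype.card α)) (χ : (Fin n → α) → C) :
    ∃ l : Combinatorics.Line α (Fin n), l.IsMono χ := by
  obtain ⟨a₀⟩ := ‹Nonempty α›
  obtain ⟨w, hwlen, hwnone, hw⟩ :=
    exists_mono_template _ rfl fun x : List α => χ fun i => x.getD i a₀
  have hfill (a : α) : (fun i : Fin n => (fillTemplate w a).getD i a₀) =
      fun i => (w[i.1]'(by omega)).getD a := by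
    funext i
    simp [fillTemplate, getElem?_eq_getElem (show i.1 < w.length by omega)]
  obtain ⟨i, hi, hnone⟩ := getElem_of_mem hwnone
  let l : Combinatorics.Line α (Fin n) := ⟨fun i => w[i.1]'(by omega), ⟨⟨i, by omega⟩, hnone⟩⟩
  refine ⟨l, χ (l a₀), fun a => ?_⟩
  have := hw a a₀
  rwa [hfill, hfill] at this

theorem exists_split_mono {ι C : Type*} [Fintype ι] [Fintype C] {M : ℕ}
    (hM : M = hjBound (Fintype.card C) (2 ^ Fintype.card ι)) (Φ : (ι → Fin M → Bool) → C) :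
    ∃ (μ : Fin M) (w : ι → Bool → Fin M → Bool), (∀ t b, w t b μ = b) ∧
      (∀ t b b' i, i < μ → w t b i = w t b' i) ∧
      ∀ s s' : ι → Bool, Φ (fun t => w t (s t)) = Φ (fun t => w t (s' t)) := by
  classical
  obtain ⟨l, c, hl⟩ := Combinatorics.Line.exists_mono_of_eq_hjBound (α := ι → Bool)
    (by rw [hM, Fintype.card_fun, Fintype.card_bool]) fun p => Φ fun t i => p i t
  set wild := Finset.univ.filter fun i => l.idxFun i = none
  have hwild : wild.Nonempty := ⟨_, by simpa [wild] using l.proper.choose_spec⟩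
  refine ⟨wild.min' hwild, fun t b i => l (fun _ => b) i t, fun t b => ?_,
    fun t b b' i hi => ?_, fun s s' => ?_⟩
  · dsimp only
    rw [l.apply_none _ _ (Finset.mem_filter.1 (Finset.min'_mem _ hwild)).2]
  · obtain ⟨a, ha⟩ := Option.ne_none_iff_exists'.1 fun h =>
      (Finset.min'_le _ i (by simpa [wild] using h)).not_gt hi
    simp [ha]
  · have hdiag (s : ι → Bool) : (fun t i => l (fun _ => s t) i t) = fun t i => l s i t := by
      funext t i
      cases h : l.idxFun i <;> simp [h]
    rw [hdiag, hdiag]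
    exact (hl s).trans (hl s').symm

theorem take_append_prefix_ofFn {α : Type*} {M : ℕ} {u v : Fin M → α} {μ : Fin M}
    (hagree : ∀ i < μ, u i = v i) : (ofFn u).take μ ++ [v μ] <+: ofFn v := by
  have htake : (ofFn u).take μ = (ofFn v).take μ := by
    refine ext_getElem (by simp) fun i hi _ => ?_
    simp only [length_take, length_ofFn] at hi
    simpa using hagree ⟨i, by omega⟩ (by simp [Fin.lt_def]; omega)
  have hsucc : (ofFn v).take (μ + 1) = (ofFn v).take μ ++ [v μ] := by simp [take_add_one]
  rw [htake, ← hsucc]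
  exact take_prefix _ _

section Canonical

variable {ι C : Type*}

def IsCanonicalOn (Γ : ι → ι → List Bool → List Bool → C) (L : ℕ)
    (E : ι → List Bool → List Bool) : Prop :=
  ∃ (g : ι → ℕ → C) (V : ι → ι → C),
    (∀ t (x y : List Bool), x.length = L → y.length = L → x ≠ y →
      Γ t t (E t x) (E t y) = g t (commonPrefixLen x y)) ∧
    ∀ t t', t ≠ t' → ∀ x y : List Bool, x.length = L → y.length = L →
      Γ t t' (E t x) (E t' y) = V t t'

def joinEmbedding (p : List Bool) (u : Bool → List Bool) (e : Bool → List Bool → List Bool) :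
    List Bool → List Bool
  | [] => p
  | b :: σ => u b ++ e b σ

def joinLevel (μ M : ℕ) (h : ℕ → ℕ) : ℕ → ℕ
  | 0 => μ
  | k + 1 => M + h k

theorem isStrongEmbedding_joinEmbedding {p : List Bool} {u : Bool → List Bool}
    {e : Bool → List Bool → List Bool} {μ M L K : ℕ} {h : ℕ → ℕ} (hp : p.length = μ)
    (hu : ∀ b, (u b).length = M) (hpu : ∀ b, p ++ [b] <+: u b)
    (he : ∀ b, IsStrongEmbedding L K (e b) h) :
    IsStrongEmbedding (L + 1) (M + K) (joinEmbedding p u e) (joinLevel μ M h) where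
  length_eq
    | [], _ => hp
    | b :: σ, hσ => by
      simp only [joinEmbedding, joinLevel, length_append, length_cons, hu,
        (he b).length_eq σ (by simpa using hσ)]
  append_prefix
    | [], _, j => (hpu j).trans (prefix_append _ _)
    | b :: σ, hσ, j => by
      simp only [joinEmbedding, cons_append, append_assoc]
      exact (prefix_append_right_inj _).2 ((he b).append_prefix σ (by simpa using hσ) j)
  level_top := by simp [joinLevel, (he false).level_top]

theorem isCanonicalOn_joinEmbedding {Γ : ι → ι → List Bool → List Bool → C}
    (hΓ : ∀ t x y, Γ t t x y = Γ t t y x) {L M : ℕ}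
    {E₀ : ι × (Fin M → Bool) → List Bool → List Bool} {g₀ : ι × (Fin M → Bool) → ℕ → C}
    {V₀ : ι × (Fin M → Bool) → ι × (Fin M → Bool) → C}
    (hg₀ : ∀ k (x y : List Bool), x.length = L → y.length = L → x ≠ y →
      Γ k.1 k.1 (ofFn k.2 ++ E₀ k x) (ofFn k.2 ++ E₀ k y) = g₀ k (commonPrefixLen x y))
    (hV₀ : ∀ k k', k ≠ k' → ∀ x y : List Bool, x.length = L → y.length = L →
      Γ k.1 k'.1 (ofFn k.2 ++ E₀ k x) (ofFn k'.2 ++ E₀ k' y) = V₀ k k')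
    {w : ι → Bool → Fin M → Bool} (hw : ∀ t, Function.Injective (w t))
    (hg : ∀ t b k, k < L → g₀ (t, w t b) k = g₀ (t, w t false) k)
    (hV : ∀ t t', t ≠ t' → ∀ b b',
      V₀ (t, w t b) (t', w t' b') = V₀ (t, w t false) (t', w t' false))
    (p : ι → List Bool) :
    IsCanonicalOn Γ (L + 1)
      fun t => joinEmbedding (p t) (fun b => ofFn (w t b)) fun b => E₀ (t, w t b) := by
  have hne (t : ι) {b c : Bool} (hbc : b ≠ c) : ((t, w t b) : ι × _) ≠ (t, w t c) :=
    fun h => hbc (hw t (Prod.ext_iff.1 h).2)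
  have hV₀_symm (t : ι) : V₀ (t, w t true) (t, w t false) = V₀ (t, w t false) (t, w t true) := by
    have hlen : (replicate L false).length = L := length_replicate
    rw [← hV₀ _ _ (hne t Bool.false_ne_true.symm) _ _ hlen hlen,
      ← hV₀ _ _ (hne t Bool.false_ne_true) _ _ hlen hlen, hΓ]
  refine ⟨fun t => fun | 0 => V₀ (t, w t false) (t, w t true) | k + 1 => g₀ (t, w t false) k,
    fun t t' => V₀ (t, w t false) (t', w t' false), fun t x y hx hy hxy => ?_,
    fun t t' htt' x y hx hy => ?_⟩
  all_goals
    obtain ⟨b, x, rfl⟩ := exists_cons_of_length_eq_add_one hx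
    obtain ⟨c, y, rfl⟩ := exists_cons_of_length_eq_add_one hy
    simp only [length_cons, add_left_inj] at hx hy
    dsimp only [joinEmbedding]
  · by_cases hbc : b = c
    · subst hbc
      have hxy : x ≠ y := fun h => hxy (h ▸ rfl)
      rw [commonPrefixLen_cons_self]
      exact (hg₀ _ x y hx hy hxy).trans
        (hg t b _ ((commonPrefixLen_lt_length (hx.trans hy.symm) hxy).trans_eq hx))
    · rw [commonPrefixLen_cons_of_ne hbc, hV₀ _ _ (hne t hbc) x y hx hy]
      obtain ⟨rfl, rfl⟩ | ⟨rfl, rfl⟩ : b = false ∧ c = true ∨ b = true ∧ c = false := by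
        cases b <;> cases c <;> simp_all
      exacts [rfl, hV₀_symm t]
  · exact (hV₀ _ _ (fun h => htt' (Prod.ext_iff.1 h).1) x y hx hy).trans (hV t t' htt' b c)

end Canonical

def splitDepth (q r L : ℕ) : ℕ := hjBound (r ^ (L * q + q * q)) (2 ^ q)

def canonicalDepth : ℕ → ℕ → ℕ → ℕ
  | _, _, 0 => 0
  | q, r, L + 1 => splitDepth q r L + canonicalDepth (q * 2 ^ splitDepth q r L) r L

theorem exists_canonical_strongEmbedding {C : Type*} [Fintype C] (L : ℕ) :
    ∀ {ι : Type*} [Fintype ι] (Γ : ι → ι → List Bool → List Bool → C),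
      (∀ t x y, Γ t t x y = Γ t t y x) →
      ∀ {K : ℕ}, canonicalDepth (Fintype.card ι) (Fintype.card C) L ≤ K →
        ∃ (E : ι → List Bool → List Bool) (h : ℕ → ℕ),
          (∀ t, IsStrongEmbedding L K (E t) h) ∧ IsCanonicalOn Γ L E := by
  induction L with
  | zero =>
    intro ι _ Γ _ K _
    refine ⟨fun _ _ => replicate K false, fun _ => K,
      fun _ => ⟨fun _ _ => length_replicate, fun _ hσ => absurd hσ (Nat.not_lt_zero _), rfl⟩,
      fun t _ => Γ t t [] [], fun t t' => Γ t t' (replicate K false) (replicate K false),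
      fun _ x y hx hy hne => absurd ((eq_nil_of_length_eq_zero hx).trans
        (eq_nil_of_length_eq_zero hy).symm) hne, fun _ _ _ _ _ _ _ => rfl⟩
  | succ L ih =>
    classical
    intro ι _ Γ hΓ K hK
    rw [canonicalDepth] at hK
    set M := splitDepth (Fintype.card ι) (Fintype.card C) L
    -- one tree for each tree `t` and node `w` of level `M`: the part of `t` above `w`
    obtain ⟨E₀, h₀, hE₀, g₀, V₀, hg₀, hV₀⟩ :=
      ih (ι := ι × (Fin M → Bool))
        (fun k k' x y => Γ k.1 k'.1 (ofFn k.2 ++ x) (ofFn k'.2 ++ y)) (fun k _ _ => hΓ k.1 _ _)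
        (K := K - M) (by
          simp only [Fintype.card_prod, Fintype.card_fun, Fintype.card_fin, Fintype.card_bool]
          omega)
    obtain ⟨μ, w, hμ, hbelow, hmono⟩ := exists_split_mono (M := M)
      (by simp only [M, splitDepth, Fintype.card_prod, Fintype.card_fun, Fintype.card_fin,
        ← pow_mul, ← pow_add])
      fun w' => ((fun t (k : Fin L) => g₀ (t, w' t) k, fun t t' => V₀ (t, w' t) (t', w' t')) :
        (ι → Fin L → C) × (ι → ι → C))
    have hw (t : ι) : Function.Injective (w t) := fun b c h => by simpa [hμ] using congrFun h μ
    have hg (t : ι) (b : Bool) (k : ℕ) (hk : k < L) : g₀ (t, w t b) k = g₀ (t, w t false) k :=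
      congrFun (congrFun (congrArg Prod.fst (hmono (fun _ => b) fun _ => false)) t) ⟨k, hk⟩
    have hV (t t' : ι) (htt' : t ≠ t') (b b' : Bool) :
        V₀ (t, w t b) (t', w t' b') = V₀ (t, w t false) (t', w t' false) := by
      have := congrFun (congrFun (congrArg Prod.snd
        (hmono (fun u => if u = t then b else b') fun _ => false)) t) t'
      simpa [Ne.symm htt'] using this
    refine ⟨fun t => joinEmbedding ((ofFn (w t false)).take μ) (fun b => ofFn (w t b))
      fun b => E₀ (t, w t b), joinLevel μ M h₀, fun t => ?_,
      isCanonicalOn_joinEmbedding hΓ hg₀ hV₀ hw hg hV _⟩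
    have hMK : M + (K - M) = K := by omega
    refine hMK ▸ isStrongEmbedding_joinEmbedding (by simp) (fun _ => length_ofFn)
      (fun b => ?_) fun b => hE₀ (t, w t b)
    simpa only [hμ] using take_append_prefix_ofFn fun i hi => hbelow t false b i hi

theorem exists_strictMono_const {β : Type*} [Fintype β] (lab : ℕ → β) {ℓ N : ℕ}
    (hN : Fintype.card β * (ℓ - 1) < N) :
    ∃ (v : ℕ → ℕ) (b : β), StrictMono v ∧ v ℓ = N ∧ ∀ k < ℓ, lab (v k) = b := by
  classical
  obtain ⟨b, -, hb⟩ := Finset.exists_lt_card_fiber_of_mul_lt_card_of_maps_to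
    (s := Finset.range N) (t := Finset.univ) (f := lab) (fun _ _ => Finset.mem_univ _)
    (by simpa using hN)
  obtain ⟨A, hA, hAcard⟩ :=
    Finset.exists_subset_card_eq (s := {x ∈ Finset.range N | lab x = b}) (n := ℓ) (by omega)
  let v (k : ℕ) : ℕ := if hk : k < ℓ then A.orderEmbOfFin hAcard ⟨k, hk⟩ else N + (k - ℓ)
  have hvA (k : ℕ) (hk : k < ℓ) : v k ∈ {x ∈ Finset.range N | lab x = b} :=
    hA (by simp [v, hk, Finset.orderEmbOfFin_mem])
  refine ⟨v, b, fun s t hst => ?_, by simp [v], fun k hk => (Finset.mem_filter.1 (hvA k hk)).2⟩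
  by_cases ht : t < ℓ
  · simpa [v, ht, hst.trans ht] using
      (A.orderEmbOfFin hAcard).strictMono (show (⟨s, hst.trans ht⟩ : Fin ℓ) < ⟨t, ht⟩ from hst)
  · have hvt : v t = N + (t - ℓ) := dif_neg ht
    by_cases hs : s < ℓ
    · have := Finset.mem_range.1 (Finset.mem_filter.1 (hvA s hs)).1
      omega
    · have hvs : v s = N + (s - ℓ) := dif_neg hs
      omega

def leafRamseyDepth (q r ℓ : ℕ) : ℕ := canonicalDepth q r (r ^ q * (ℓ - 1) + 1)

theorem exists_monochromatic_strongEmbedding {ι C : Type*} [Fintype ι] [Fintype C]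
    (Γ : ι → ι → List Bool → List Bool → C) (hΓ : ∀ t x y, Γ t t x y = Γ t t y x) {ℓ K : ℕ}
    (hK : leafRamseyDepth (Fintype.card ι) (Fintype.card C) ℓ ≤ K) :
    ∃ (E : ι → List Bool → List Bool) (h : ℕ → ℕ), (∀ t, IsStrongEmbedding ℓ K (E t) h) ∧
      (∃ a : ι → C, ∀ t (x y : List Bool), x.length = ℓ → y.length = ℓ → x ≠ y →
        Γ t t (E t x) (E t y) = a t) ∧
      ∃ V : ι → ι → C, ∀ t t', t ≠ t' → ∀ x y : List Bool, x.length = ℓ → y.length = ℓ →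
        Γ t t' (E t x) (E t' y) = V t t' := by
  classical
  obtain ⟨E, h, hE, g, V, hg, hV⟩ := exists_canonical_strongEmbedding _ Γ hΓ hK
  obtain ⟨v, a, hv, hvℓ, ha⟩ := exists_strictMono_const (fun k t => g t k)
    (ℓ := ℓ) (N := Fintype.card C ^ Fintype.card ι * (ℓ - 1) + 1) (by simp)
  have hsel := isStrongEmbedding_selectLevels hv ℓ
  rw [hvℓ] at hsel
  have hleaf (x : List Bool) (hx : x.length = ℓ) :
      (selectLevels v x).length = Fintype.card C ^ Fintype.card ι * (ℓ - 1) + 1 := by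
    rw [hsel.length_eq x hx.le, hx, hvℓ]
  refine ⟨fun t σ => E t (selectLevels v σ), fun s => h (v s), fun t => hsel.comp (hE t),
    ⟨a, fun t x y hx hy hxy => ?_⟩, V, fun t t' htt' x y hx hy =>
      hV t t' htt' _ _ (hleaf x hx) (hleaf y hy)⟩
  rw [hg t _ _ (hleaf x hx) (hleaf y hy) (hsel.map_ne_map hx hy hxy),
    hsel.commonPrefixLen_map hx hy hxy]
  exact congrFun (ha _ ((commonPrefixLen_lt_length (hx.trans hy.symm) hxy).trans_eq hx)) t

theorem primrec_nat_pow : Primrec₂ fun a b : ℕ => a ^ b :=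
  Primrec₂.unpaired'.1 Nat.Primrec.pow

theorem hjBound_eq_rec (r k : ℕ) :
    hjBound r k = Nat.rec (motive := fun _ => ℕ) 1
      (fun k n => if k = 0 then 1 else (fun P => P + shelahBlockSize (k + 1) r n P)^[n] 0) k := by
  induction k with
  | zero => rfl
  | succ k ih =>
    have hsucc : hjBound r (k + 1) = if k = 0 then 1 else
        (fun P => P + shelahBlockSize (k + 1) r (hjBound r k) P)^[hjBound r k] 0 := by
      rcases k with _ | k <;> rfl
    rw [hsucc, ih]

theorem primrec_hjBound : Primrec₂ hjBound := by
  have hstep :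
      Primrec₂ fun (a : ℕ × ℕ × ℕ) (P : ℕ) => P + shelahBlockSize (a.1 + 1) a.2.1 a.2.2 P :=
    Primrec.nat_add.comp₂ Primrec₂.right <| primrec_nat_pow.comp₂
      (Primrec.fst.comp (Primrec.snd.comp Primrec.fst)).to₂ <| primrec_nat_pow.comp₂
        (Primrec.succ.comp (Primrec.fst.comp Primrec.fst)).to₂
        (Primrec.nat_add.comp₂ Primrec₂.right (Primrec.snd.comp (Primrec.snd.comp Primrec.fst)).to₂)
  have hiter : Primrec fun a : ℕ × ℕ × ℕ =>
      (fun P => P + shelahBlockSize (a.1 + 1) a.2.1 a.2.2 P)^[a.2.2] 0 :=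
    Primrec.nat_iterate (Primrec.snd.comp Primrec.snd) (Primrec.const 0) hstep
  have hrec := Primrec.nat_rec (f := fun _ : ℕ => (1 : ℕ)) (Primrec.const 1)
    (g := fun r (p : ℕ × ℕ) => if p.1 = 0 then 1 else
      (fun P => P + shelahBlockSize (p.1 + 1) r p.2 P)^[p.2] 0)
    (Primrec.ite (Primrec.eq.comp (Primrec.fst.comp Primrec.snd) (Primrec.const 0))
      (Primrec.const 1) (hiter.comp ((Primrec.fst.comp Primrec.snd).pair
        (Primrec.fst.pair (Primrec.snd.comp Primrec.snd))))).to₂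
  exact hrec.of_eq fun r k => (hjBound_eq_rec r k).symm

theorem primrec_splitDepth : Primrec fun a : ℕ × ℕ × ℕ => splitDepth a.1 a.2.1 a.2.2 :=
  primrec_hjBound.comp
    (primrec_nat_pow.comp (Primrec.fst.comp Primrec.snd) <| Primrec.nat_add.comp
      (Primrec.nat_mul.comp (Primrec.snd.comp Primrec.snd) Primrec.fst)
      (Primrec.nat_mul.comp Primrec.fst Primrec.fst))
    (primrec_nat_pow.comp (Primrec.const 2) Primrec.fst)

/-- Tail-recursive form of `canonicalDepth` on states (levels left, number of trees, depth used). -/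
def canonicalDepthStep (r : ℕ) (s : ℕ × ℕ × ℕ) : ℕ × ℕ × ℕ :=
  (s.1 - 1, s.2.1 * 2 ^ splitDepth s.2.1 r (s.1 - 1), s.2.2 + splitDepth s.2.1 r (s.1 - 1))

theorem canonicalDepth_eq_iterate (q r L : ℕ) :
    canonicalDepth q r L = ((canonicalDepthStep r)^[L] (L, q, 0)).2.2 := by
  suffices h : ∀ q a, ((canonicalDepthStep r)^[L] (L, q, a)).2.2 = a + canonicalDepth q r L by
    rw [h, zero_add]
  induction L with
  | zero => intro q a; rfl
  | succ L ih =>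
    intro q a
    rw [Function.iterate_succ_apply, canonicalDepthStep, Nat.add_sub_cancel, ih, canonicalDepth,
      add_assoc]

theorem primrec_canonicalDepth : Primrec fun a : ℕ × ℕ × ℕ => canonicalDepth a.1 a.2.1 a.2.2 := by
  have hsplit :
      Primrec fun p : (ℕ × ℕ × ℕ) × (ℕ × ℕ × ℕ) => splitDepth p.2.2.1 p.1.2.1 (p.2.1 - 1) :=
    primrec_splitDepth.comp <| (Primrec.fst.comp (Primrec.snd.comp Primrec.snd)).pair <|
      (Primrec.fst.comp (Primrec.snd.comp Primrec.fst)).pair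
        (Primrec.nat_sub.comp (Primrec.fst.comp Primrec.snd) (Primrec.const 1))
  have hstep : Primrec₂ fun (a s : ℕ × ℕ × ℕ) => canonicalDepthStep a.2.1 s :=
    ((Primrec.nat_sub.comp (Primrec.fst.comp Primrec.snd) (Primrec.const 1)).pair <|
      (Primrec.nat_mul.comp (Primrec.fst.comp (Primrec.snd.comp Primrec.snd))
        (primrec_nat_pow.comp (Primrec.const 2) hsplit)).pair
      (Primrec.nat_add.comp (Primrec.snd.comp (Primrec.snd.comp Primrec.snd)) hsplit)).to₂
  have hiter := Primrec.nat_iterate (Primrec.snd.comp Primrec.snd)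
    ((Primrec.snd.comp Primrec.snd).pair (Primrec.fst.pair (Primrec.const 0))) hstep
  exact (Primrec.snd.comp (Primrec.snd.comp hiter)).of_eq fun a =>
    (canonicalDepth_eq_iterate a.1 a.2.1 a.2.2).symm

theorem nat_primrec_leafRamseyDepth :
    Nat.Primrec fun c : ℕ => leafRamseyDepth c.unpair.1 2 c.unpair.2 := by
  rw [← Primrec.nat_iff]
  have hd : Primrec fun c : ℕ => c.unpair.1 := Primrec.fst.comp Primrec.unpair
  have hℓ : Primrec fun c : ℕ => c.unpair.2 := Primrec.snd.comp Primrec.unpair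
  exact primrec_canonicalDepth.comp <| hd.pair <| (Primrec.const 2).pair <| Primrec.nat_add.comp
    (Primrec.nat_mul.comp (primrec_nat_pow.comp (Primrec.const 2) hd)
      (Primrec.nat_sub.comp hℓ (Primrec.const 1))) (Primrec.const 1)

/-- stabilization of a pair-coloring of leaves of a strong `d`-forest. -/
theorem stmt_13 :
    ∃ B : ℕ → ℕ → ℕ,
      Nat.Primrec (fun c : ℕ => B c.unpair.1 c.unpair.2) ∧
      ∀ d : ℕ, 1 ≤ d → ∀ ℓ : ℕ,
        ∀ (T : Fin d → Finset (List Bool)) (f : Fin d → List Bool → List Bool) (h : ℕ → ℕ),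
          IsStrongForest d (B d ℓ) T f h →
          ∀ c : Finset (List Bool) → Fin 2,
            ∃ (S : Fin d → Finset (List Bool)) (fS : Fin d → List Bool → List Bool)
              (hS : ℕ → ℕ),
              IsStrongForest d ℓ S fS hS ∧
              (∀ i : Fin d, Leaves ℓ (fS i) ⊆ Leaves (B d ℓ) (f i)) ∧
              ∀ i j : Fin d,
                ∀ σ ∈ Leaves ℓ (fS i), ∀ σ' ∈ Leaves ℓ (fS i),
                ∀ τ ∈ Leaves ℓ (fS j), ∀ τ' ∈ Leaves ℓ (fS j),
                  σ ≠ τ → σ' ≠ τ' → c {σ, τ} = c {σ', τ'} := by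
  refine ⟨fun d ℓ => leafRamseyDepth d 2 ℓ, nat_primrec_leafRamseyDepth, ?_⟩
  intro d _ ℓ T f h hT c
  obtain ⟨E, lvl, hE, ⟨a, ha⟩, V, hV⟩ :=
    exists_monochromatic_strongEmbedding (fun i j x y => c {f i x, f j y})
      (fun i x y => by rw [Finset.pair_comm]) (ℓ := ℓ) (K := leafRamseyDepth d 2 ℓ) (by simp)
  refine ⟨T, fun i σ => f i (E i σ), fun s => h (lvl s), hT.comp hE,
    fun i => (hE i).leaves_comp_subset (f i), ?_⟩
  rintro i j _ ⟨x, hx, rfl⟩ _ ⟨x', hx', rfl⟩ _ ⟨y, hy, rfl⟩ _ ⟨y', hy', rfl⟩ hxy hxy'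
  rcases eq_or_ne i j with rfl | hij
  · exact (ha i x y hx hy fun h => hxy (h ▸ rfl)).trans
      (ha i x' y' hx' hy' fun h => hxy' (h ▸ rfl)).symm
  · exact (hV i j hij x y hx hy).trans (hV i j hij x' y' hx' hy').symm
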